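/- arXiv:2302.06255 — 3 statements merged into one kernel-verified Lean document; each statement's English description precedes it below -/
import Mathlib

section
/- Let G be a group, N a normal subgroup of G with quotient map q : G → G/N, and Γ a group. Suppose (a) every homomorphism from any finite-index subgroup of Γ to N has finite image, and (b) every homomorphism from Γ to G/N has finite image. Then every homomorphism from Γ to G has finite image. -/
/-- Stability of super-rigidity under short exact sequences: if every homomorphism
from any finite-index subgroup of `Γ` to `N` has finite image, and every homomorphism
from `Γ` to `G ⧸ N` has finite image, then every homomorphism from `Γ` to `G` has
finite image. -/
theorem stmt_0 {Γ G : Type*} [Group Γ] [Group G] (N : Subgroup G) [N.Normal]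
    (ha : ∀ (Γ' : Subgroup Γ), Γ'.FiniteIndex →
      ∀ f : Γ' →* N, (Set.range f).Finite)
    (hb : ∀ f : Γ →* G ⧸ N, (Set.range f).Finite)
    (φ : Γ →* G) : (Set.range φ).Finite := by
  set ψ := (QuotientGroup.mk' N).comp φ with hψ
  set K := ψ.ker with hK
  -- K has finite index
  have hfin : Finite ψ.range := by
    have : ((ψ.range : Subgroup (G ⧸ N)) : Set (G ⧸ N)).Finite := by
      rw [MonoidHom.coe_range]; exact hb ψ
    exact this.to_subtype
  haveI h1 : Finite (Γ ⧸ K) := by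
    have e := QuotientGroup.quotientKerEquivRange ψ
    exact Finite.of_equiv _ e.toEquiv.symm
  have hKfi : K.FiniteIndex := Subgroup.finiteIndex_of_finite_quotient
  -- φ maps K into N
  have hmem : ∀ x : K, φ x ∈ N := by
    intro x
    have : ψ x = 1 := x.2
    simpa [hψ, QuotientGroup.eq_one_iff] using this
  let f : K →* N := (φ.comp K.subtype).codRestrict N hmem
  have hf : (Set.range f).Finite := ha K hKfi f
  -- K.map φ is finite
  have hmap : ((K.map φ : Subgroup G) : Set G) = Subtype.val '' (Set.range f) := by
    ext g
    simp only [Subgroup.coe_map, Set.mem_image, Set.mem_range]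
    constructor
    · rintro ⟨x, hx, rfl⟩
      exact ⟨⟨φ x, hmem ⟨x, hx⟩⟩, ⟨⟨x, hx⟩, rfl⟩, rfl⟩
    · rintro ⟨n, ⟨x, rfl⟩, rfl⟩
      exact ⟨x, x.2, rfl⟩
  have hmapfin : ((K.map φ : Subgroup G) : Set G).Finite := by
    rw [hmap]; exact hf.image _
  have hmapfin' : Finite (K.map φ) := hmapfin.to_subtype
  -- K.map φ has finite index in φ.range
  have hle : K ≤ (K.map φ).comap φ := fun x hx => Subgroup.mem_comap.mpr ⟨x, hx, rfl⟩
  have hcfi : ((K.map φ).comap φ).FiniteIndex := Subgroup.finiteIndex_of_le hle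
  have hrel : ((K.map φ).comap φ).index = (K.map φ).relIndex φ.range :=
    Subgroup.index_comap _ φ
  have hSfi : (((K.map φ)).subgroupOf φ.range).FiniteIndex := by
    constructor
    rw [show ((K.map φ).subgroupOf φ.range).index = (K.map φ).relIndex φ.range from rfl,
      ← hrel]
    exact hcfi.index_ne_zero
  have hS : Finite ((K.map φ).subgroupOf φ.range) := by
    apply Finite.of_injective
      (fun x : (K.map φ).subgroupOf φ.range =>
        (⟨((x : φ.range) : G), Subgroup.mem_subgroupOf.mp x.2⟩ : K.map φ))
    intro a b h
    have := congrArg Subtype.val h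
    exact Subtype.ext (Subtype.ext this)
  have : Finite φ.range := Finite.of_subgroup_quotient ((K.map φ).subgroupOf φ.range)
  rw [← MonoidHom.coe_range]
  exact Set.toFinite _
end

section
/- Let φ : Γ → G be a group homomorphism, N ⊴ G a normal subgroup, and q : G → G/N the quotient map. If the image of q ∘ φ is finite and every homomorphism from any finite-index subgroup of Γ to N has finite image, then the image of φ is finite. -/
/-- Key step of the extension stability theorem: if `q ∘ φ` has finite image
(`q : G → G ⧸ N` the quotient map) and every homomorphism from any finite-index
subgroup of `Γ` to `N` has finite image, then `φ` has finite image. -/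
theorem stmt_2 {Γ G : Type*} [Group Γ] [Group G] (N : Subgroup G) [N.Normal]
    (φ : Γ →* G)
    (hq : (Set.range ((QuotientGroup.mk' N).comp φ)).Finite)
    (hN : ∀ (Γ' : Subgroup Γ), Γ'.FiniteIndex →
      ∀ f : Γ' →* N, (Set.range f).Finite) :
    (Set.range φ).Finite := by
  set ψ := (QuotientGroup.mk' N).comp φ with hψ
  set K := ψ.ker with hK
  have hKfi : K.FiniteIndex := by
    constructor
    rw [hK, Subgroup.index_ker]
    have h1 := hq.to_subtype
    have : Finite ψ.range :=
      Finite.of_equiv _ (Equiv.setCongr ψ.coe_range.symm)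
    exact Nat.card_ne_zero.2 ⟨⟨1, 1, map_one ψ⟩, this⟩
  -- restriction of φ to K lands in N
  have hmem : ∀ γ : K, φ γ ∈ N := by
    intro γ
    have : ψ γ = 1 := γ.2
    simpa [hψ, QuotientGroup.eq_one_iff] using this
  let f : K →* N := (φ.comp K.subtype).codRestrict N hmem
  have hf : (Set.range f).Finite := hN K hKfi f
  -- choose representatives
  have hq' := hq
  obtain ⟨s, hs⟩ := hq
  classical
  -- rep : for each c in range ψ, pick γ with ψ γ = c
  let rep : Set.range ψ → Γ := fun c => Exists.choose c.2
  have hsub : Set.range φ ⊆ Set.image2 (· * ·) ((↑) '' Set.range f)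
      (φ '' Set.range rep) := by
    rintro _ ⟨γ, rfl⟩
    set c : Set.range ψ := ⟨ψ γ, γ, rfl⟩
    have hc : ψ (rep c) = ψ γ := c.2.choose_spec
    set δ := rep c
    have hKmem : γ * δ⁻¹ ∈ K := by
      simp [hK, MonoidHom.mem_ker, hc]
    refine ⟨(φ (γ * δ⁻¹) : G), ⟨f ⟨γ * δ⁻¹, hKmem⟩, ⟨⟨γ * δ⁻¹, hKmem⟩, rfl⟩, rfl⟩,
      φ δ, ⟨δ, ⟨c, rfl⟩, rfl⟩, ?_⟩
    simp [mul_assoc]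
  refine Set.Finite.subset (Set.Finite.image2 _ (hf.image _) ?_) hsub
  have : Finite (Set.range ψ) := hq'
  exact (Set.finite_range rep).image _
end

section
/- Let G be a group with normal subgroup N such that N ≅ ℤ is central (e.g., the braid group B_n with its center, fitting in the exact sequence 1 → ℤ → B_n → MCG_x(S_{n+1}) → 1). If Γ is a group such that (i) every finite-index subgroup of Γ has finite abelianization and (ii) every homomorphism Γ → G/N has finite image, then every homomorphism Γ → G has finite image. -/
lemma mz_finorder (a : Multiplicative ℤ) (h : IsOfFinOrder a) : a = 1 := by
  obtain ⟨n, hn, hpow⟩ := h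
  have : (n : ℤ) * a.toAdd = 0 := by
    have := congrArg Multiplicative.toAdd hpow
    simpa [toAdd_pow, nsmul_eq_mul] using this
  have : a.toAdd = 0 := by
    rcases mul_eq_zero.mp this with h' | h'
    · exact absurd (by exact_mod_cast h') (by omega)
    · exact h'
  exact Multiplicative.toAdd.injective (by simpa using this)

/-- Extension stability in the central `ℤ` case (e.g. the braid group with its
center): let `N ⊴ G` be a central subgroup isomorphic to `ℤ`. If every
finite-index subgroup of `Γ` has finite abelianization and every homomorphism
`Γ →* G ⧸ N` has finite image, then every homomorphism `Γ →* G` has finite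
image. -/
theorem stmt_19 {Γ G : Type*} [Group Γ] [Group G]
    (N : Subgroup G) [N.Normal] (hcentral : N ≤ Subgroup.center G)
    (hNZ : Nonempty (N ≃* Multiplicative ℤ))
    (hab : ∀ (H : Subgroup Γ), H.FiniteIndex → Finite (Abelianization H))
    (hquot : ∀ f : Γ →* G ⧸ N, (Set.range f).Finite)
    (φ : Γ →* G) : (Set.range φ).Finite := by
  obtain ⟨e⟩ := hNZ
  set f : Γ →* G ⧸ N := (QuotientGroup.mk' N).comp φ with hf
  have hfin : (Set.range f).Finite := hquot f
  have hHidx : f.ker.FiniteIndex := by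
    constructor
    rw [Subgroup.index_ker]
    have : Finite (Set.range f) := hfin
    exact Nat.card_ne_zero.mpr ⟨⟨f 1, 1, rfl⟩, this⟩
  set H := f.ker
  have hmem : ∀ x : H, φ x ∈ N := by
    intro x
    have : f x = 1 := x.2
    simpa [hf, QuotientGroup.eq_one_iff] using this
  let ψ : H →* N :=
    { toFun := fun x => ⟨φ x, hmem x⟩
      map_one' := by ext; simp
      map_mul' := fun a b => by ext; simp }
  let χ : H →* Multiplicative ℤ := e.toMonoidHom.comp ψ
  have habH := hab H hHidx
  have hχ1 : ∀ x : H, χ x = 1 := by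
    intro x
    have : χ x = (Abelianization.lift χ) (Abelianization.of x) := by
      simp
    rw [this]
    apply mz_finorder
    exact MonoidHom.isOfFinOrder _ (isOfFinOrder_of_finite _)
  have hker : H ≤ φ.ker := by
    intro x hx
    have h1 : χ ⟨x, hx⟩ = 1 := hχ1 ⟨x, hx⟩
    have : ψ ⟨x, hx⟩ = 1 := e.injective (by simpa [χ] using h1)
    have := congrArg Subtype.val this
    simpa [ψ, MonoidHom.mem_ker] using this
  have hφidx : φ.ker.FiniteIndex := Subgroup.finiteIndex_of_le hker
  have h0 : Nat.card φ.range ≠ 0 := by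
    rw [← Subgroup.index_ker]; exact hφidx.index_ne_zero
  have hfinr : Finite φ.range := (Nat.card_ne_zero.mp h0).2
  have : (φ.range : Set G).Finite := Set.finite_coe_iff.mpr hfinr
  simpa [MonoidHom.coe_range] using this
end
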